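/- Let Γ be a primitive graded graph (for any two vertices λ₁, λ₂ there exists a vertex μ with μ ≥ λ₁ and μ ≥ λ₂) and let I be a nonempty ideal of Γ, regarded as a graded graph with the induced edges. Then the restriction map φ ↦ φ|_I is a bijection from the set of strictly positive indecomposable harmonic functions on Γ (finite or semifinite) onto the set of strictly positive indecomposable harmonic functions on I (finite or semifinite). -/

import Mathlib

/-!
Common definitions: graded graphs, ideals and coideals, harmonic functions and the
cone `K⁺`, finite / semifinite / indecomposable harmonic functions.
-/

open scoped ENNReal NNReal

namespace Zigzag

/-- A graded graph: vertices partitioned into finite levels, oriented edges going up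
one level, every vertex having at least one outgoing edge. -/
structure GradedGraph where
  V : Type
  rank : V → ℕ
  adj : V → V → Prop
  rank_adj : ∀ ⦃x y⦄, adj x y → rank y = rank x + 1
  finLevels : ∀ n : ℕ, {x : V | rank x = n}.Finite
  outEdge : ∀ x : V, ∃ y, adj x y

namespace GradedGraph

variable (G : GradedGraph)

/-- `x ≤ y`: `y` is reachable from `x` by a directed path (possibly trivial). -/
def le (x y : G.V) : Prop := Relation.ReflTransGen G.adj x y

/-- The finset of upper neighbours of a vertex. -/
noncomputable def upFinset (x : G.V) : Finset G.V :=
  ((G.finLevels (G.rank x + 1)).subset fun _ hy => G.rank_adj hy).toFinset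

/-- A coideal: closed under going down. -/
def IsCoideal (J : Set G.V) : Prop := ∀ a ∈ J, ∀ b, G.le b a → b ∈ J

/-- A saturated coideal: a coideal in which every vertex has an upper neighbour. -/
def IsSatCoideal (J : Set G.V) : Prop :=
  G.IsCoideal J ∧ ∀ a ∈ J, ∃ b ∈ J, G.adj a b

/-- A primitive saturated coideal: a saturated coideal which is not the union of two
strictly smaller saturated coideals. -/
def IsPrimCoideal (J : Set G.V) : Prop :=
  G.IsSatCoideal J ∧ ∀ J₁ J₂ : Set G.V, G.IsSatCoideal J₁ → G.IsSatCoideal J₂ →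
    J = J₁ ∪ J₂ → J = J₁ ∨ J = J₂

/-- An ideal: closed under going up. -/
def IsIdeal (I : Set G.V) : Prop := ∀ a ∈ I, ∀ b, G.le a b → b ∈ I

/-- A `[0,∞]`-valued function on the vertices is harmonic if its value at any vertex
equals the sum of its values at the upper neighbours. -/
def Harmonic (φ : G.V → ℝ≥0∞) : Prop := ∀ x, φ x = ∑ y ∈ G.upFinset x, φ y

/-- The relation `λ = ∑_{μ : λ ↗ μ} μ` as an element of the free module. -/
noncomputable def relOf (x : G.V) : G.V →₀ ℝ :=
  Finsupp.single x 1 - ∑ y ∈ G.upFinset x, Finsupp.single y 1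

/-- The submodule of relations defining `K(Γ)`. -/
noncomputable def Krel : Submodule ℝ (G.V →₀ ℝ) :=
  Submodule.span ℝ (Set.range G.relOf)

/-- The class of `f` in `K(Γ)`. -/
noncomputable def kmk (f : G.V →₀ ℝ) : (G.V →₀ ℝ) ⧸ G.Krel :=
  Submodule.Quotient.mk f

/-- The cone `K⁺(Γ)` spanned by the vertices in `K(Γ)`. -/
noncomputable def Kpos : Set ((G.V →₀ ℝ) ⧸ G.Krel) :=
  G.kmk '' {f | ∀ x, 0 ≤ f x}

/-- The order defined by the cone: `x ≤_K y` iff `y − x ∈ K⁺(Γ)`. -/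
def leK (x y : (G.V →₀ ℝ) ⧸ G.Krel) : Prop := y - x ∈ G.Kpos

/-- The value of (the canonical extension of) `φ` at a nonnegative combination of
vertices. -/
noncomputable def phiHat (φ : G.V → ℝ≥0∞) (f : G.V →₀ ℝ) : ℝ≥0∞ :=
  ∑ x ∈ f.support, ENNReal.ofReal (f x) * φ x

/-- `φ` is everywhere finite. -/
def FiniteH (φ : G.V → ℝ≥0∞) : Prop := ∀ x, φ x ≠ ⊤

/-- `φ` is semifinite: not everywhere finite, and its value at any element of the cone
`K⁺(Γ)` is the supremum of its values at the `≤_K`-smaller elements of the cone where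
it is finite. -/
def Semifinite (φ : G.V → ℝ≥0∞) : Prop :=
  (∃ x, φ x = ⊤) ∧
  ∀ f : G.V →₀ ℝ, (∀ x, 0 ≤ f x) →
    G.phiHat φ f =
      ⨆ g ∈ {g : G.V →₀ ℝ |
        (∀ x, 0 ≤ g x) ∧ G.leK (G.kmk g) (G.kmk f) ∧ G.phiHat φ g ≠ ⊤},
        G.phiHat φ g

/-- A semifinite harmonic function `φ` is indecomposable if any finite or semifinite
harmonic function `φ′ ≤ φ` which does not vanish identically on the finiteness ideal
of `φ` is a constant multiple of `φ` on that ideal. -/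
def IndecSemifinite (φ : G.V → ℝ≥0∞) : Prop :=
  ∀ φ' : G.V → ℝ≥0∞, G.Harmonic φ' →
    (G.FiniteH φ' ∨ G.Semifinite φ') →
    (∀ x, φ' x ≤ φ x) →
    (∃ x, φ x ≠ ⊤ ∧ φ' x ≠ 0) →
    ∃ c : ℝ≥0, ∀ x, φ x ≠ ⊤ → φ' x = (c : ℝ≥0∞) * φ x

/-- A finite harmonic function `φ` is indecomposable if any harmonic function
`φ′ ≤ φ` which is not identically zero is a constant multiple of `φ`. -/
def IndecFinite (φ : G.V → ℝ≥0∞) : Prop :=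
  ∀ φ' : G.V → ℝ≥0∞, G.Harmonic φ' →
    (∀ x, φ' x ≤ φ x) → (∃ x, φ' x ≠ 0) →
    ∃ c : ℝ≥0, ∀ x, φ' x = (c : ℝ≥0∞) * φ x

/-- The number of directed paths from `x` to `y` (the shifted dimension
`dim(x, y)`). -/
noncomputable def gdim (x y : G.V) : ℕ :=
  Nat.card {p : List G.V // p.Chain' G.adj ∧ p.head? = some x ∧ p.getLast? = some y}

end GradedGraph

end Zigzag

namespace Zigzag

namespace GradedGraph

/-- The graded graph induced on an ideal `I` of `G`. -/
noncomputable def restrict (G : GradedGraph) (I : Set G.V) (hI : G.IsIdeal I) :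
    GradedGraph where
  V := {x : G.V // x ∈ I}
  rank x := G.rank x.1
  adj x y := G.adj x.1 y.1
  rank_adj _ _ h := G.rank_adj h
  finLevels n := by
    have : {x : {x : G.V // x ∈ I} | G.rank x.1 = n}
        ⊆ Subtype.val ⁻¹' {x : G.V | G.rank x = n} := fun x hx => hx
    exact Set.Finite.subset
      ((G.finLevels n).preimage (Set.injOn_of_injective Subtype.val_injective)) this
  outEdge x := by
    obtain ⟨y, hy⟩ := G.outEdge x.1
    exact ⟨⟨y, hI x.1 x.2 y (Relation.ReflTransGen.single hy)⟩, hy⟩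

end GradedGraph

/-!
Write `minExt v` for the minimal harmonic extension of data `v` given on an ideal: its value
at `x` is the supremum over `n` of the sum of `v` over all paths from `x` to level `n`.
A finite or semifinite harmonic function `φ` is the minimal extension of its values on its
finiteness ideal; for semifinite `φ` this is exactly the approximation from below in `K⁺(Γ)`.
If `φ` is moreover positive and indecomposable and `Γ` is primitive, then `φ` is already the
minimal extension of its values on `I ∩ {φ < ∞}`, because that extension is a harmonic minorant
of `φ` which agrees with `φ` at some vertex. Hence `φ` is determined by `φ|_I`. Conversely a
function `ψ` on `I` extends minimally to `Γ`, and indecomposability passes between `ψ` and its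
extension because two harmonic minorants of a minimal extension that agree on the ideal carrying
the data agree wherever the extension is finite.
-/

namespace GradedGraph

variable {G : GradedGraph}

lemma mem_upFinset {x y : G.V} : y ∈ G.upFinset x ↔ G.adj x y :=
  Set.Finite.mem_toFinset _

lemma rank_of_mem_upFinset {x y : G.V} (h : y ∈ G.upFinset x) : G.rank y = G.rank x + 1 :=
  G.rank_adj (mem_upFinset.1 h)

lemma rank_induction (n : ℕ) {p : G.V → Prop} (base : ∀ x, n ≤ G.rank x → p x)
    (step : ∀ x, G.rank x < n → (∀ y ∈ G.upFinset x, p y) → p x) (x : G.V) : p x := by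
  suffices ∀ k x, n - G.rank x ≤ k → p x from this _ x le_rfl
  intro k
  induction k with
  | zero => exact fun x hx => base x (by omega)
  | succ k ih =>
    intro x hx
    rcases le_or_gt n (G.rank x) with h | h
    · exact base x h
    · exact step x h fun y hy => ih y (by have := rank_of_mem_upFinset hy; omega)

lemma IsIdeal.mem_of_mem_upFinset {I : Set G.V} (hI : G.IsIdeal I) {x y : G.V} (hx : x ∈ I)
    (hy : y ∈ G.upFinset x) : y ∈ I :=
  hI x hx y (.single (mem_upFinset.1 hy))

lemma IsIdeal.inter {I J : Set G.V} (hI : G.IsIdeal I) (hJ : G.IsIdeal J) :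
    G.IsIdeal (I ∩ J) :=
  fun x hx y hxy => ⟨hI x hx.1 y hxy, hJ x hx.2 y hxy⟩

lemma exists_mem_le_of_isIdeal (hprim : ∀ x y : G.V, ∃ z, G.le x z ∧ G.le y z)
    {I : Set G.V} (hI : G.IsIdeal I) (hne : I.Nonempty) (x : G.V) : ∃ z ∈ I, G.le x z := by
  obtain ⟨y, hy⟩ := hne
  obtain ⟨z, hxz, hyz⟩ := hprim x y
  exact ⟨z, hI y hy z hyz, hxz⟩

def finitenessIdeal {α : Type*} (φ : α → ℝ≥0∞) : Set α := {x | φ x ≠ ⊤}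

lemma indicator_ne_top_of_subset {α : Type*} {s : Set α} {φ ψ : α → ℝ≥0∞}
    (hs : s ⊆ finitenessIdeal ψ) (h : φ ≤ ψ) (x : α) : s.indicator φ x ≠ ⊤ := by
  by_cases hx : x ∈ s
  · exact (Set.indicator_of_mem hx φ).trans_ne (ne_top_of_le_ne_top (hs hx) (h x))
  · simp [Set.indicator_of_notMem hx]

section Harmonic

variable {φ : G.V → ℝ≥0∞}

lemma Harmonic.le_of_adj (hφ : G.Harmonic φ) {x y : G.V} (h : G.adj x y) : φ y ≤ φ x :=
  (hφ x).symm ▸ Finset.single_le_sum (fun _ _ => zero_le) (mem_upFinset.2 h)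

lemma Harmonic.antitone (hφ : G.Harmonic φ) {x y : G.V} (h : G.le x y) : φ y ≤ φ x := by
  induction h with
  | refl => exact le_rfl
  | tail _ hadj ih => exact (hφ.le_of_adj hadj).trans ih

lemma Harmonic.isIdeal_finitenessIdeal (hφ : G.Harmonic φ) : G.IsIdeal (finitenessIdeal φ) :=
  fun _ hx _ hxy => ne_top_of_le_ne_top hx (hφ.antitone hxy)

lemma harmonic_zero : G.Harmonic 0 := fun _ => by simp

lemma Harmonic.const_mul (hφ : G.Harmonic φ) (c : ℝ≥0∞) : G.Harmonic (fun y => c * φ y) :=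
  fun x => by rw [← Finset.mul_sum, ← hφ x]

end Harmonic

noncomputable def pathSum (G : GradedGraph) (v : G.V → ℝ≥0∞) : ℕ → G.V → ℝ≥0∞
  | 0, x => v x
  | k + 1, x => ∑ y ∈ G.upFinset x, G.pathSum v k y

noncomputable def levelPart (G : GradedGraph) (n : ℕ) (v : G.V → ℝ≥0∞) : G.V → ℝ≥0∞ :=
  fun x => if G.rank x = n then v x else 0

/-- The sum of `v` over the endpoints of all paths from `x` to level `n`; for `x` above level
`n` the truncated difference is `0` and `levelPart` makes the value `0`. -/
noncomputable def levelSum (G : GradedGraph) (v : G.V → ℝ≥0∞) (n : ℕ) (x : G.V) : ℝ≥0∞ :=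
  G.pathSum (G.levelPart n v) (n - G.rank x) x

noncomputable def minExt (G : GradedGraph) (v : G.V → ℝ≥0∞) : G.V → ℝ≥0∞ :=
  fun x => ⨆ n, G.levelSum v n x

section LevelSum

variable {v w : G.V → ℝ≥0∞} {n : ℕ} {x : G.V}

lemma levelSum_of_lt (h : n < G.rank x) : G.levelSum v n x = 0 := by
  simp [levelSum, Nat.sub_eq_zero_of_le h.le, pathSum, levelPart, h.ne']

lemma levelSum_rank : G.levelSum v (G.rank x) x = v x := by
  simp [levelSum, pathSum, levelPart]

lemma levelSum_of_rank_le (h : n ≤ G.rank x) :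
    G.levelSum v n x = if G.rank x = n then v x else 0 := by
  rcases h.lt_or_eq with h | rfl
  · simp [levelSum_of_lt h, h.ne']
  · simp [levelSum_rank]

lemma levelSum_eq_sum (h : G.rank x < n) :
    G.levelSum v n x = ∑ y ∈ G.upFinset x, G.levelSum v n y := by
  obtain ⟨k, hk⟩ : ∃ k, n - G.rank x = k + 1 := ⟨n - G.rank x - 1, by omega⟩
  rw [levelSum, hk, pathSum]
  refine Finset.sum_congr rfl fun y hy => ?_
  rw [levelSum, show n - G.rank y = k by have := rank_of_mem_upFinset hy; omega]

lemma levelSum_mono (h : v ≤ w) (n : ℕ) (x : G.V) : G.levelSum v n x ≤ G.levelSum w n x := by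
  induction x using rank_induction n with
  | base x hx => rw [levelSum_of_rank_le hx, levelSum_of_rank_le hx]; split_ifs <;> simp [h x]
  | step x hx ih =>
    rw [levelSum_eq_sum hx, levelSum_eq_sum hx]
    exact Finset.sum_le_sum ih

lemma levelSum_add (v w : G.V → ℝ≥0∞) (n : ℕ) (x : G.V) :
    G.levelSum (v + w) n x = G.levelSum v n x + G.levelSum w n x := by
  induction x using rank_induction n with
  | base x hx => simp only [levelSum_of_rank_le hx]; split_ifs <;> simp
  | step x hx ih => simp only [levelSum_eq_sum hx, Finset.sum_congr rfl ih, Finset.sum_add_distrib]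

lemma levelSum_ne_top (hv : ∀ y, v y ≠ ⊤) (n : ℕ) (x : G.V) : G.levelSum v n x ≠ ⊤ := by
  induction x using rank_induction n with
  | base x hx => rw [levelSum_of_rank_le hx]; split_ifs <;> simp [hv x]
  | step x hx ih => rw [levelSum_eq_sum hx]; exact ENNReal.sum_ne_top.2 ih

lemma levelSum_le_of_superharmonic {φ : G.V → ℝ≥0∞}
    (hφ : ∀ x, ∑ y ∈ G.upFinset x, φ y ≤ φ x) (hv : v ≤ φ) (n : ℕ) (x : G.V) :
    G.levelSum v n x ≤ φ x := by
  induction x using rank_induction n with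
  | base x hx => rw [levelSum_of_rank_le hx]; split_ifs <;> simp [hv x]
  | step x hx ih => rw [levelSum_eq_sum hx]; exact (Finset.sum_le_sum ih).trans (hφ x)

lemma levelSum_eq_of_harmonicOn {J : Set G.V} (hJ : G.IsIdeal J)
    (hv : ∀ x ∈ J, v x = ∑ y ∈ G.upFinset x, v y) (hx : x ∈ J) (h : G.rank x ≤ n) :
    G.levelSum v n x = v x := by
  induction x using rank_induction n with
  | base x hx' => rw [levelSum_of_rank_le hx', if_pos (le_antisymm h hx')]
  | step x hx' ih =>
    rw [levelSum_eq_sum hx', hv x hx]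
    refine Finset.sum_congr rfl fun y hy => ih y hy (hJ.mem_of_mem_upFinset hx hy) ?_
    have := rank_of_mem_upFinset hy
    omega

lemma Harmonic.levelSum_eq {φ : G.V → ℝ≥0∞} (hφ : G.Harmonic φ) (h : G.rank x ≤ n) :
    G.levelSum φ n x = φ x :=
  levelSum_eq_of_harmonicOn (J := Set.univ) (fun _ _ _ _ => trivial) (fun x _ => hφ x) trivial h

end LevelSum

structure IsHarmonicOnIdeal (G : GradedGraph) (J : Set G.V) (v : G.V → ℝ≥0∞) : Prop where
  isIdeal : G.IsIdeal J
  eq_zero : ∀ x ∉ J, v x = 0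
  harmonic : ∀ x ∈ J, v x = ∑ y ∈ G.upFinset x, v y

lemma IsHarmonicOnIdeal.le_sum {J : Set G.V} {v : G.V → ℝ≥0∞} (hv : G.IsHarmonicOnIdeal J v)
    (x : G.V) : v x ≤ ∑ y ∈ G.upFinset x, v y := by
  by_cases hx : x ∈ J
  · exact (hv.harmonic x hx).le
  · simp [hv.eq_zero x hx]

lemma Harmonic.isHarmonicOnIdeal_indicator {φ : G.V → ℝ≥0∞} (hφ : G.Harmonic φ) {J : Set G.V}
    (hJ : G.IsIdeal J) : G.IsHarmonicOnIdeal J (J.indicator φ) where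
  isIdeal := hJ
  eq_zero _ hx := Set.indicator_of_notMem hx φ
  harmonic x hx := by
    rw [Set.indicator_of_mem hx, hφ x]
    exact Finset.sum_congr rfl fun y hy =>
      (Set.indicator_of_mem (hJ.mem_of_mem_upFinset hx hy) φ).symm

section MinExt

variable {J : Set G.V} {v w φ : G.V → ℝ≥0∞} {x : G.V}

lemma IsHarmonicOnIdeal.monotone_levelSum (hv : G.IsHarmonicOnIdeal J v) (x : G.V) :
    Monotone (G.levelSum v · x) := by
  refine monotone_nat_of_le_succ fun n => ?_
  induction x using rank_induction n with
  | base x hx =>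
    rcases hx.lt_or_eq with hx | rfl
    · simp [levelSum_of_lt hx]
    · rw [levelSum_rank, levelSum_eq_sum (Nat.lt_succ_self _)]
      refine (hv.le_sum x).trans (Finset.sum_le_sum fun y hy => ?_)
      rw [Nat.succ_eq_add_one, ← rank_of_mem_upFinset hy, levelSum_rank]
  | step x hx ih =>
    rw [levelSum_eq_sum hx, levelSum_eq_sum (hx.trans (Nat.lt_succ_self n))]
    exact Finset.sum_le_sum ih

lemma IsHarmonicOnIdeal.minExt_eq (hv : G.IsHarmonicOnIdeal J v) (hx : x ∈ J) :
    G.minExt v x = v x := by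
  refine le_antisymm (iSup_le fun n => ?_)
    (levelSum_rank.symm.trans_le (le_iSup (G.levelSum v · x) (G.rank x)))
  rcases lt_or_ge n (G.rank x) with h | h
  · simp [levelSum_of_lt h]
  · exact (levelSum_eq_of_harmonicOn hv.isIdeal hv.harmonic hx h).le

lemma Harmonic.minExt_le (hφ : G.Harmonic φ) (hv : v ≤ φ) : G.minExt v ≤ φ :=
  fun x => iSup_le fun n => levelSum_le_of_superharmonic (fun y => (hφ y).ge) hv n x

lemma minExt_mono (h : v ≤ w) : G.minExt v ≤ G.minExt w :=
  fun x => iSup_mono fun n => levelSum_mono h n x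

lemma minExt_zero : G.minExt 0 = 0 :=
  le_antisymm (harmonic_zero.minExt_le le_rfl) zero_le

/-- Past level `rank x + 1` every level sum at `x` splits over the upper neighbours, and the
supremum does not see the first levels since the level sums increase. -/
lemma IsHarmonicOnIdeal.harmonic_minExt (hv : G.IsHarmonicOnIdeal J v) :
    G.Harmonic (G.minExt v) := by
  intro x
  have shift := fun y => ((hv.monotone_levelSum y).iSup_nat_add (G.rank x + 1)).symm
  calc G.minExt v x = ⨆ n, G.levelSum v (n + (G.rank x + 1)) x := shift x
    _ = ⨆ n, ∑ y ∈ G.upFinset x, G.levelSum v (n + (G.rank x + 1)) y :=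
        iSup_congr fun n => levelSum_eq_sum (by omega)
    _ = ∑ y ∈ G.upFinset x, ⨆ n, G.levelSum v (n + (G.rank x + 1)) y :=
        (ENNReal.finsetSum_iSup_of_monotone fun y _ _ hab =>
          hv.monotone_levelSum y (by omega)).symm
    _ = ∑ y ∈ G.upFinset x, G.minExt v y := Finset.sum_congr rfl fun y _ => (shift y).symm

end MinExt

section Uniqueness

variable {J : Set G.V} {φ u v : G.V → ℝ≥0∞} {x : G.V}

lemma levelSum_indicator_add_compl (J : Set G.V) (v : G.V → ℝ≥0∞) (n : ℕ) (x : G.V) :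
    G.levelSum (J.indicator v) n x + G.levelSum (Jᶜ.indicator v) n x = G.levelSum v n x := by
  rw [← levelSum_add, Set.indicator_self_add_compl]

lemma le_add_tsub_levelSum_indicator (hφ : G.Harmonic φ) (hu : G.Harmonic u)
    (hv : G.Harmonic v) (hu' : u ≤ φ) (huv : Set.EqOn u v J) (hx : φ x ≠ ⊤) {n : ℕ}
    (hn : G.rank x ≤ n) : u x ≤ v x + (φ x - G.levelSum (J.indicator φ) n x) := by
  have hφn : G.levelSum (J.indicator φ) n x + G.levelSum (Jᶜ.indicator φ) n x = φ x := by
    rw [levelSum_indicator_add_compl, hφ.levelSum_eq hn]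
  have hfin : G.levelSum (J.indicator φ) n x ≠ ⊤ := ne_top_of_le_ne_top hx (hφn ▸ le_self_add)
  calc u x = G.levelSum (J.indicator u) n x + G.levelSum (Jᶜ.indicator u) n x := by
        rw [levelSum_indicator_add_compl, hu.levelSum_eq hn]
    _ ≤ v x + G.levelSum (Jᶜ.indicator φ) n x := by
        rw [Set.indicator_congr huv]
        gcongr
        · exact levelSum_le_of_superharmonic (fun y => (hv y).ge) (Set.indicator_le_self J v) n x
        · exact levelSum_mono (fun y => Set.indicator_le_indicator (hu' y)) n x
    _ = v x + (φ x - G.levelSum (J.indicator φ) n x) := by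
        rw [← hφn, ENNReal.add_sub_cancel_left hfin]

/-- When `φ` is the minimal extension of its values on `J`, the part of `φ x` that lives
outside `J` at level `n` tends to `0` wherever `φ` is finite. -/
lemma le_of_eqOn_of_minExt_eq (hφ : G.Harmonic φ) (hJ : G.IsIdeal J)
    (hφJ : G.minExt (J.indicator φ) = φ) (hu : G.Harmonic u) (hv : G.Harmonic v)
    (hu' : u ≤ φ) (huv : Set.EqOn u v J) (hx : φ x ≠ ⊤) : u x ≤ v x := by
  have hsup : ⨆ n, G.levelSum (J.indicator φ) (n + G.rank x) x = φ x := by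
    rw [((hφ.isHarmonicOnIdeal_indicator hJ).monotone_levelSum x).iSup_nat_add]
    exact congrFun hφJ x
  calc u x ≤ ⨅ n, v x + (φ x - G.levelSum (J.indicator φ) (n + G.rank x) x) :=
        le_iInf fun n => le_add_tsub_levelSum_indicator hφ hu hv hu' huv hx (by omega)
    _ = v x := by rw [← ENNReal.add_iInf, ← ENNReal.sub_iSup hx, hsup, tsub_self, add_zero]

lemma eqOn_finitenessIdeal_of_eqOn (hφ : G.Harmonic φ) (hJ : G.IsIdeal J)
    (hφJ : G.minExt (J.indicator φ) = φ) (hu : G.Harmonic u) (hv : G.Harmonic v)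
    (hu' : u ≤ φ) (hv' : v ≤ φ) (huv : Set.EqOn u v J) : Set.EqOn u v (finitenessIdeal φ) :=
  fun _ hx => le_antisymm (le_of_eqOn_of_minExt_eq hφ hJ hφJ hu hv hu' huv hx)
    (le_of_eqOn_of_minExt_eq hφ hJ hφJ hv hu hv' huv.symm hx)

end Uniqueness

section PhiHat

variable {w φ ψ : G.V → ℝ≥0∞} {f g : G.V →₀ ℝ}

lemma phiHat_eq_sum_of_support_subset {T : Finset G.V} (hT : f.support ⊆ T) :
    G.phiHat w f = ∑ x ∈ T, ENNReal.ofReal (f x) * w x :=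
  Finset.sum_subset hT fun x _ hx => by simp [Finsupp.notMem_support_iff.1 hx]

lemma phiHat_congr (h : Set.EqOn φ ψ f.support) : G.phiHat φ f = G.phiHat ψ f :=
  Finset.sum_congr rfl fun x hx => by rw [h hx]

lemma phiHat_mono (h : φ ≤ ψ) : G.phiHat φ f ≤ G.phiHat ψ f :=
  Finset.sum_le_sum fun x _ => mul_le_mul_right (h x) _

lemma phiHat_add (hf : ∀ x, 0 ≤ f x) (hg : ∀ x, 0 ≤ g x) :
    G.phiHat w (f + g) = G.phiHat w f + G.phiHat w g := by
  classical
  rw [phiHat_eq_sum_of_support_subset Finsupp.support_add,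
    phiHat_eq_sum_of_support_subset Finset.subset_union_left,
    phiHat_eq_sum_of_support_subset Finset.subset_union_right, ← Finset.sum_add_distrib]
  exact Finset.sum_congr rfl fun x _ => by
    rw [Finsupp.add_apply, ENNReal.ofReal_add (hf x) (hg x), add_mul]

lemma phiHat_smul {c : ℝ} (hc : 0 ≤ c) : G.phiHat w (c • f) = ENNReal.ofReal c * G.phiHat w f := by
  rw [phiHat_eq_sum_of_support_subset Finsupp.support_smul, phiHat, Finset.mul_sum]
  exact Finset.sum_congr rfl fun x _ => by
    rw [Finsupp.smul_apply, smul_eq_mul, ENNReal.ofReal_mul hc, mul_assoc]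

lemma phiHat_single (x : G.V) (r : ℝ) :
    G.phiHat w (Finsupp.single x r) = ENNReal.ofReal r * w x := by
  rcases eq_or_ne r 0 with rfl | hr
  · simp [phiHat]
  · rw [phiHat, Finsupp.support_single x hr, Finset.sum_singleton,
      Finsupp.single_eq_same]

lemma phiHat_sum {ι : Type*} {s : Finset ι} {F : ι → G.V →₀ ℝ}
    (hF : ∀ i ∈ s, ∀ x, 0 ≤ F i x) : G.phiHat w (∑ i ∈ s, F i) = ∑ i ∈ s, G.phiHat w (F i) := by
  classical
  induction s using Finset.induction_on with
  | empty => simp [phiHat]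
  | insert a s ha ih =>
    have hs : ∀ i ∈ s, ∀ x, 0 ≤ F i x := fun i hi => hF i (Finset.mem_insert_of_mem hi)
    rw [Finset.sum_insert ha, Finset.sum_insert ha, phiHat_add (hF a (Finset.mem_insert_self a s))
      fun x => by rw [Finset.sum_apply']; exact Finset.sum_nonneg fun i hi => hs i hi x, ih hs]

lemma phiHat_eq_top_of_mem_support (hf : ∀ x, 0 ≤ f x) {x : G.V} (hx : x ∈ f.support)
    (htop : w x = ⊤) : G.phiHat w f = ⊤ := by
  refine top_le_iff.1 (le_trans ?_ (Finset.single_le_sum (f := fun x => ENNReal.ofReal (f x) * w x)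
    (fun _ _ => zero_le) hx))
  rw [htop, ENNReal.mul_top (ENNReal.ofReal_pos.2 ((hf x).lt_of_ne
    (Finsupp.mem_support_iff.1 hx).symm)).ne']

lemma support_subset_finitenessIdeal (hf : ∀ x, 0 ≤ f x) (h : G.phiHat w f ≠ ⊤) :
    ↑f.support ⊆ finitenessIdeal w :=
  fun _ hx htop => h (phiHat_eq_top_of_mem_support hf hx htop)

end PhiHat

noncomputable def pushVec (G : GradedGraph) : ℕ → G.V → (G.V →₀ ℝ)
  | 0, x => Finsupp.single x 1
  | k + 1, x => ∑ y ∈ G.upFinset x, G.pushVec k y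

noncomputable def pushToLevel (G : GradedGraph) (m : ℕ) (f : G.V →₀ ℝ) : G.V →₀ ℝ :=
  ∑ x ∈ f.support, f x • G.pushVec (m - G.rank x) x

section PushVec

variable {f : G.V →₀ ℝ} {m : ℕ}

lemma kmk_eq_iff {f g : G.V →₀ ℝ} : G.kmk f = G.kmk g ↔ f - g ∈ G.Krel :=
  Submodule.Quotient.eq G.Krel

lemma kmk_add (f g : G.V →₀ ℝ) : G.kmk (f + g) = G.kmk f + G.kmk g :=
  Submodule.Quotient.mk_add G.Krel

lemma kmk_sub (f g : G.V →₀ ℝ) : G.kmk (f - g) = G.kmk f - G.kmk g :=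
  Submodule.Quotient.mk_sub G.Krel

lemma kmk_smul (c : ℝ) (f : G.V →₀ ℝ) : G.kmk (c • f) = c • G.kmk f :=
  Submodule.Quotient.mk_smul G.Krel c f

lemma kmk_sum {ι : Type*} (s : Finset ι) (F : ι → G.V →₀ ℝ) :
    G.kmk (∑ i ∈ s, F i) = ∑ i ∈ s, G.kmk (F i) :=
  map_sum G.Krel.mkQ F s

lemma pushVec_nonneg (k : ℕ) (x μ : G.V) : 0 ≤ G.pushVec k x μ := by
  classical
  induction k generalizing x with
  | zero => rw [pushVec, Finsupp.single_apply]; split_ifs <;> norm_num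
  | succ k ih => rw [pushVec, Finset.sum_apply']; exact Finset.sum_nonneg fun y _ => ih y

lemma kmk_pushVec (k : ℕ) (x : G.V) : G.kmk (G.pushVec k x) = G.kmk (Finsupp.single x 1) := by
  induction k generalizing x with
  | zero => rfl
  | succ k ih =>
    have hrel : G.relOf x ∈ G.Krel := Submodule.subset_span (Set.mem_range_self x)
    rw [eq_comm, kmk_eq_iff.2 hrel, pushVec, kmk_sum, kmk_sum]
    exact Finset.sum_congr rfl fun y _ => (ih y).symm

lemma rank_eq_of_mem_support_pushVec {k : ℕ} {x μ : G.V} (h : μ ∈ (G.pushVec k x).support) :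
    G.rank μ = G.rank x + k := by
  classical
  induction k generalizing x with
  | zero =>
    rw [pushVec, Finsupp.support_single x one_ne_zero, Finset.mem_singleton] at h
    simp [h]
  | succ k ih =>
    obtain ⟨y, hy, hμ⟩ := Finset.mem_biUnion.1 (Finsupp.support_finsetSum h)
    rw [ih hμ, rank_of_mem_upFinset hy]
    ring

lemma phiHat_pushVec (w : G.V → ℝ≥0∞) (k : ℕ) (x : G.V) :
    G.phiHat w (G.pushVec k x) = G.pathSum w k x := by
  induction k generalizing x with
  | zero => simp [pushVec, pathSum, phiHat_single]
  | succ k ih =>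
    rw [pushVec, phiHat_sum fun y _ => pushVec_nonneg k y, pathSum]
    exact Finset.sum_congr rfl fun y _ => ih y

lemma pushToLevel_nonneg (hf : ∀ x, 0 ≤ f x) (μ : G.V) : 0 ≤ G.pushToLevel m f μ := by
  rw [pushToLevel, Finset.sum_apply']
  exact Finset.sum_nonneg fun x _ => mul_nonneg (hf x) (pushVec_nonneg _ x μ)

lemma rank_eq_of_mem_support_pushToLevel (hm : ∀ x ∈ f.support, G.rank x ≤ m) {μ : G.V}
    (hμ : μ ∈ (G.pushToLevel m f).support) : G.rank μ = m := by
  classical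
  obtain ⟨x, hx, hμ⟩ := Finset.mem_biUnion.1 (Finsupp.support_finsetSum hμ)
  rw [rank_eq_of_mem_support_pushVec (Finsupp.support_smul hμ)]
  have := hm x hx
  omega

lemma kmk_pushToLevel : G.kmk (G.pushToLevel m f) = G.kmk f := by
  conv_rhs => rw [← Finsupp.sum_single f]
  rw [pushToLevel, Finsupp.sum, kmk_sum, kmk_sum]
  refine Finset.sum_congr rfl fun x _ => ?_
  rw [kmk_smul, kmk_pushVec, ← kmk_smul, Finsupp.smul_single_one]

lemma phiHat_pushToLevel (hf : ∀ x, 0 ≤ f x) (v : G.V → ℝ≥0∞) :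
    G.phiHat (G.levelPart m v) (G.pushToLevel m f) = G.phiHat (G.levelSum v m) f := by
  rw [pushToLevel, phiHat_sum fun x _ μ => mul_nonneg (hf x) (pushVec_nonneg _ x μ)]
  exact Finset.sum_congr rfl fun x _ => by rw [phiHat_smul (hf x), phiHat_pushVec, levelSum]

end PushVec

noncomputable def levelFunctional (G : GradedGraph) (v : G.V → ℝ≥0∞) (n : ℕ) :
    (G.V →₀ ℝ) →ₗ[ℝ] ℝ :=
  Finsupp.linearCombination ℝ fun y => (G.levelSum v n y).toReal

section Semifinite

variable {J : Set G.V} {v φ : G.V → ℝ≥0∞} {f g : G.V →₀ ℝ} {n : ℕ}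

lemma levelFunctional_relOf (hv : ∀ y, v y ≠ ⊤) {x : G.V} (h : G.rank x < n) :
    G.levelFunctional v n (G.relOf x) = 0 := by
  simp only [relOf, map_sub, map_sum, levelFunctional, Finsupp.linearCombination_single,
    one_smul]
  rw [levelSum_eq_sum h, ENNReal.toReal_sum fun y _ => levelSum_ne_top hv n y, sub_self]

lemma exists_levelFunctional_eq_zero (hv : ∀ y, v y ≠ ⊤) {u : G.V →₀ ℝ} (hu : u ∈ G.Krel) :
    ∃ N, ∀ n, N < n → G.levelFunctional v n u = 0 := by
  obtain ⟨c, rfl⟩ := Finsupp.mem_span_range_iff_exists_finsupp.1 hu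
  refine ⟨c.support.sup G.rank, fun n hn => ?_⟩
  rw [map_finsuppSum]
  refine Finset.sum_eq_zero fun x hx => ?_
  dsimp only
  rw [map_smul, levelFunctional_relOf hv ((Finset.le_sup hx).trans_lt hn), smul_zero]

lemma levelFunctional_nonneg (hf : ∀ x, 0 ≤ f x) : 0 ≤ G.levelFunctional v n f := by
  simp only [levelFunctional, Finsupp.linearCombination_apply, Finsupp.sum]
  exact Finset.sum_nonneg fun x _ => smul_nonneg (hf x) ENNReal.toReal_nonneg

lemma ofReal_levelFunctional (hv : ∀ y, v y ≠ ⊤) (hf : ∀ x, 0 ≤ f x) :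
    ENNReal.ofReal (G.levelFunctional v n f) = G.phiHat (G.levelSum v n) f := by
  simp only [levelFunctional, Finsupp.linearCombination_apply, Finsupp.sum, smul_eq_mul]
  rw [ENNReal.ofReal_sum_of_nonneg fun x _ => mul_nonneg (hf x) ENNReal.toReal_nonneg]
  exact Finset.sum_congr rfl fun x _ => by
    rw [ENNReal.ofReal_mul (hf x), ENNReal.ofReal_toReal (levelSum_ne_top hv n x)]

lemma IsHarmonicOnIdeal.monotone_phiHat_levelSum (hv : G.IsHarmonicOnIdeal J v)
    (f : G.V →₀ ℝ) : Monotone fun n => G.phiHat (G.levelSum v n) f :=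
  fun _ _ hab => phiHat_mono fun x => hv.monotone_levelSum x hab

lemma IsHarmonicOnIdeal.phiHat_minExt (hv : G.IsHarmonicOnIdeal J v) (f : G.V →₀ ℝ) :
    G.phiHat (G.minExt v) f = ⨆ n, G.phiHat (G.levelSum v n) f := by
  simp only [phiHat, minExt, ENNReal.mul_iSup]
  exact ENNReal.finsetSum_iSup_of_monotone fun x _ _ hab =>
    mul_le_mul_right (hv.monotone_levelSum x hab) _

lemma IsHarmonicOnIdeal.phiHat_minExt_le_of_leK (hv : G.IsHarmonicOnIdeal J v)
    (hvfin : ∀ y, v y ≠ ⊤) (hf : ∀ x, 0 ≤ f x) (hg : ∀ x, 0 ≤ g x)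
    (hle : G.leK (G.kmk g) (G.kmk f)) : G.phiHat (G.minExt v) g ≤ G.phiHat (G.minExt v) f := by
  obtain ⟨h, hh, hkmk⟩ := hle
  have hrel : h - (f - g) ∈ G.Krel := kmk_eq_iff.1 (by rw [hkmk, kmk_sub])
  obtain ⟨N, hN⟩ := exists_levelFunctional_eq_zero hvfin hrel
  have hlevel : ∀ n, N < n → G.phiHat (G.levelSum v n) g ≤ G.phiHat (G.levelSum v n) f := by
    intro n hn
    have h0 := hN n hn
    rw [map_sub, map_sub] at h0
    rw [← ofReal_levelFunctional hvfin hg, ← ofReal_levelFunctional hvfin hf]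
    exact ENNReal.ofReal_le_ofReal (by linarith [levelFunctional_nonneg (v := v) (n := n) hh])
  rw [hv.phiHat_minExt, hv.phiHat_minExt, ← (hv.monotone_phiHat_levelSum g).iSup_nat_add (N + 1),
    ← (hv.monotone_phiHat_levelSum f).iSup_nat_add (N + 1)]
  exact iSup_mono fun n => hlevel _ (by omega)

/-- Push `f` up to level `m` and keep only the part inside `J`: what is discarded is
`≥_K 0`, and what is kept is paired with `minExt v = v` on `J`. -/
lemma IsHarmonicOnIdeal.exists_leK_phiHat_minExt_eq (hv : G.IsHarmonicOnIdeal J v)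
    (hf : ∀ x, 0 ≤ f x) {m : ℕ} (hm : ∀ x ∈ f.support, G.rank x ≤ m) :
    ∃ g : G.V →₀ ℝ, (∀ x, 0 ≤ g x) ∧ G.leK (G.kmk g) (G.kmk f) ∧
      G.phiHat (G.minExt v) g = G.phiHat (G.levelSum v m) f := by
  classical
  set F := G.pushToLevel m f
  have hfilter : ∀ (p : G.V → Prop) [DecidablePred p] μ, 0 ≤ F.filter p μ := fun p _ μ => by
    rw [Finsupp.filter_apply]
    split_ifs
    exacts [pushToLevel_nonneg hf μ, le_rfl]
  have hin : Set.EqOn (G.minExt v) (G.levelPart m v) (F.filter (· ∈ J)).support := by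
    intro μ hμ
    rw [Finsupp.support_filter, Finset.coe_filter] at hμ
    rw [hv.minExt_eq hμ.2, levelPart, if_pos (rank_eq_of_mem_support_pushToLevel hm hμ.1)]
  have hout : Set.EqOn (G.levelPart m v) 0 (F.filter (· ∉ J)).support := by
    intro μ hμ
    rw [Finsupp.support_filter, Finset.coe_filter] at hμ
    simp [levelPart, hv.eq_zero μ hμ.2]
  refine ⟨F.filter (· ∈ J), hfilter _, ⟨F.filter (· ∉ J), hfilter _, ?_⟩, ?_⟩
  · rw [eq_sub_iff_add_eq, ← kmk_add, add_comm, Finsupp.filter_add_filter_not]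
    exact kmk_pushToLevel
  · calc G.phiHat (G.minExt v) (F.filter (· ∈ J))
        = G.phiHat (G.levelPart m v) (F.filter (· ∈ J)) +
            G.phiHat (G.levelPart m v) (F.filter (· ∉ J)) := by
          rw [phiHat_congr hin, phiHat_congr hout]
          simp [phiHat]
      _ = G.phiHat (G.levelSum v m) f := by
          rw [← phiHat_add (hfilter _) (hfilter _), Finsupp.filter_add_filter_not,
            phiHat_pushToLevel hf]

lemma IsHarmonicOnIdeal.semifinite_minExt (hv : G.IsHarmonicOnIdeal J v) (hvfin : ∀ y, v y ≠ ⊤)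
    (htop : ∃ x, G.minExt v x = ⊤) : G.Semifinite (G.minExt v) := by
  refine ⟨htop, fun f hf => le_antisymm ?_ (iSup₂_le fun g ⟨hg, hgf, _⟩ =>
    hv.phiHat_minExt_le_of_leK hvfin hf hg hgf)⟩
  rw [hv.phiHat_minExt, ← (hv.monotone_phiHat_levelSum f).iSup_nat_add (f.support.sup G.rank)]
  refine iSup_le fun n => ?_
  obtain ⟨g, hg, hgf, hgeq⟩ := hv.exists_leK_phiHat_minExt_eq hf
    (m := n + f.support.sup G.rank) fun x hx => (Finset.le_sup hx).trans (by omega)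
  have hgfin : G.phiHat (G.minExt v) g ≠ ⊤ := by
    rw [hgeq]
    exact ENNReal.sum_ne_top.2 fun x _ =>
      ENNReal.mul_ne_top ENNReal.ofReal_ne_top (levelSum_ne_top hvfin _ x)
  exact hgeq ▸ le_iSup₂_of_le (f := fun g _ => G.phiHat (G.minExt v) g) g ⟨hg, hgf, hgfin⟩ le_rfl

lemma IsHarmonicOnIdeal.finite_or_semifinite_minExt (hv : G.IsHarmonicOnIdeal J v)
    (hvfin : ∀ y, v y ≠ ⊤) : G.FiniteH (G.minExt v) ∨ G.Semifinite (G.minExt v) := by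
  by_cases htop : ∃ x, G.minExt v x = ⊤
  · exact .inr (hv.semifinite_minExt hvfin htop)
  · exact .inl fun x hx => htop ⟨x, hx⟩

/-- At a vertex where `φ = ⊤`, semifiniteness approximates `φ` by elements of `K⁺` below the
vertex on which `φ` is finite, and on these `φ` agrees with the minimal extension. -/
lemma Harmonic.minExt_indicator_finitenessIdeal (hφ : G.Harmonic φ)
    (hφs : G.FiniteH φ ∨ G.Semifinite φ) :
    G.minExt ((finitenessIdeal φ).indicator φ) = φ := by
  set F := finitenessIdeal φ
  have hv := hφ.isHarmonicOnIdeal_indicator hφ.isIdeal_finitenessIdeal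
  funext x
  by_cases hx : x ∈ F
  · rw [hv.minExt_eq hx, Set.indicator_of_mem hx]
  obtain hφfin | ⟨-, hφs⟩ := hφs
  · exact absurd (hφfin x) hx
  have hφx : φ x = ⊤ := not_not.1 hx
  refine hφx ▸ top_le_iff.1 ?_
  have hsingle : ∀ y, 0 ≤ Finsupp.single x (1 : ℝ) y := fun y => by
    classical
    rw [Finsupp.single_apply]; split_ifs <;> norm_num
  have hsemi := hφs _ hsingle
  rw [phiHat_single, ENNReal.ofReal_one, one_mul, hφx] at hsemi
  rw [hsemi]
  refine iSup₂_le fun g ⟨hg, hgx, hgfin⟩ => ?_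
  have hgF : Set.EqOn φ (G.minExt (F.indicator φ)) g.support := fun μ hμ => by
    have hμF := support_subset_finitenessIdeal hg hgfin hμ
    rw [hv.minExt_eq hμF, Set.indicator_of_mem hμF]
  calc G.phiHat φ g = G.phiHat (G.minExt (F.indicator φ)) g := phiHat_congr hgF
    _ ≤ G.phiHat (G.minExt (F.indicator φ)) (Finsupp.single x 1) :=
        hv.phiHat_minExt_le_of_leK (indicator_ne_top_of_subset subset_rfl le_rfl) hsingle hg hgx
    _ = G.minExt (F.indicator φ) x := by rw [phiHat_single, ENNReal.ofReal_one, one_mul]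

end Semifinite

section Restrict

variable {I : Set G.V} {hI : G.IsIdeal I}

open Classical in
noncomputable def extendByZero (w : (G.restrict I hI).V → ℝ≥0∞) : G.V → ℝ≥0∞ :=
  fun x => if h : x ∈ I then w ⟨x, h⟩ else 0

lemma extendByZero_val (w : (G.restrict I hI).V → ℝ≥0∞) (z : (G.restrict I hI).V) :
    extendByZero w z.1 = w z := by
  rw [extendByZero, dif_pos z.2]
  rfl

lemma extendByZero_of_notMem (w : (G.restrict I hI).V → ℝ≥0∞) {x : G.V} (hx : x ∉ I) :
    extendByZero w x = 0 := by
  rw [extendByZero, dif_neg hx]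

lemma extendByZero_le {w : (G.restrict I hI).V → ℝ≥0∞} {φ : G.V → ℝ≥0∞} (h : ∀ z, w z ≤ φ z.1) :
    extendByZero w ≤ φ := fun x => by
  by_cases hx : x ∈ I
  · exact (extendByZero_val w ⟨x, hx⟩).trans_le (h _)
  · simp [extendByZero_of_notMem w hx]

lemma extendByZero_ne_top {w : (G.restrict I hI).V → ℝ≥0∞} (h : ∀ z, w z ≠ ⊤) (x : G.V) :
    extendByZero w x ≠ ⊤ := by
  by_cases hx : x ∈ I
  · exact (extendByZero_val w ⟨x, hx⟩).trans_ne (h _)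
  · simp [extendByZero_of_notMem w hx]

lemma sum_upFinset_restrict (x : (G.restrict I hI).V) (F : G.V → ℝ≥0∞) :
    ∑ z ∈ (G.restrict I hI).upFinset x, F z.1 = ∑ y ∈ G.upFinset x.1, F y :=
  Finset.sum_bij' (fun z _ => z.1) (fun y hy => ⟨y, hI.mem_of_mem_upFinset x.2 hy⟩)
    (fun _ hz => mem_upFinset.2 ((mem_upFinset (G := G.restrict I hI)).1 hz))
    (fun _ hy => (mem_upFinset (G := G.restrict I hI)).2 ((mem_upFinset (G := G)).1 hy))
    (fun _ _ => rfl) (fun _ _ => rfl) (fun _ _ => rfl)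

lemma Harmonic.restrict {φ : G.V → ℝ≥0∞} (hφ : G.Harmonic φ) :
    (G.restrict I hI).Harmonic (fun z => φ z.1) :=
  fun x => (hφ x.1).trans (sum_upFinset_restrict x φ).symm

lemma restrict_le_of_le {x y : G.V} (hx : x ∈ I) (h : G.le x y) :
    (G.restrict I hI).le ⟨x, hx⟩ ⟨y, hI x hx y h⟩ := by
  induction h with
  | refl => exact .refl
  | tail hxb hbc ih => exact .tail ih hbc

lemma levelSum_restrict (v : G.V → ℝ≥0∞) (n : ℕ) (x : (G.restrict I hI).V) :
    (G.restrict I hI).levelSum (fun z => v z.1) n x = G.levelSum v n x.1 := by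
  induction x using rank_induction n with
  | base x hx => rw [levelSum_of_rank_le hx, levelSum_of_rank_le (G := G) hx]; rfl
  | step x hx ih =>
    rw [levelSum_eq_sum hx, levelSum_eq_sum (G := G) hx, ← sum_upFinset_restrict x]
    exact Finset.sum_congr rfl ih

lemma minExt_restrict (v : G.V → ℝ≥0∞) (x : (G.restrict I hI).V) :
    (G.restrict I hI).minExt (fun z => v z.1) x = G.minExt v x.1 :=
  iSup_congr fun n => levelSum_restrict v n x

lemma minExt_extendByZero (w : (G.restrict I hI).V → ℝ≥0∞) (x : (G.restrict I hI).V) :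
    G.minExt (extendByZero w) x.1 = (G.restrict I hI).minExt w x := by
  rw [← minExt_restrict]
  simp only [extendByZero_val]

lemma IsHarmonicOnIdeal.extendByZero {J : Set (G.restrict I hI).V}
    {w : (G.restrict I hI).V → ℝ≥0∞} (hw : (G.restrict I hI).IsHarmonicOnIdeal J w) :
    G.IsHarmonicOnIdeal (Subtype.val '' J) (extendByZero w) where
  isIdeal := by
    rintro _ ⟨x, hx, rfl⟩ y hxy
    exact ⟨_, hw.isIdeal x hx _ (restrict_le_of_le x.2 hxy), rfl⟩
  eq_zero x hx := by
    by_cases hxI : x ∈ I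
    · exact (extendByZero_val w ⟨x, hxI⟩).trans (hw.eq_zero _ fun h => hx ⟨_, h, rfl⟩)
    · exact extendByZero_of_notMem w hxI
  harmonic := by
    rintro _ ⟨(x : (G.restrict I hI).V), hx, rfl⟩
    rw [extendByZero_val, hw.harmonic x hx, ← sum_upFinset_restrict x]
    simp only [extendByZero_val]

lemma Harmonic.finite_or_semifinite_restrict {φ : G.V → ℝ≥0∞} (hφ : G.Harmonic φ)
    (hφI : G.minExt ((I ∩ finitenessIdeal φ).indicator φ) = φ) :
    (G.restrict I hI).FiniteH (fun x => φ x.1) ∨ (G.restrict I hI).Semifinite (fun x => φ x.1) := by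
  have hφ' := hφ.restrict (hI := hI)
  have hv := hφ'.isHarmonicOnIdeal_indicator hφ'.isIdeal_finitenessIdeal
  have hdata : (fun z : (G.restrict I hI).V => (I ∩ finitenessIdeal φ).indicator φ z.1) =
      (finitenessIdeal fun x : (G.restrict I hI).V => φ x.1).indicator fun x => φ x.1 := by
    classical
    funext z
    simp [Set.indicator_apply, finitenessIdeal, z.2]
  have heq : (fun x : (G.restrict I hI).V => φ x.1) =
      (G.restrict I hI).minExt ((finitenessIdeal fun x : (G.restrict I hI).V => φ x.1).indicator
        fun x => φ x.1) := by
    funext x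
    rw [← hdata, minExt_restrict, hφI]
  rw [heq]
  exact hv.finite_or_semifinite_minExt (indicator_ne_top_of_subset subset_rfl le_rfl)

end Restrict

lemma Harmonic.finitenessIdeal_nonempty {φ : G.V → ℝ≥0∞} (hφ : G.Harmonic φ)
    (hφs : G.FiniteH φ ∨ G.Semifinite φ) {x : G.V} (hx : φ x ≠ 0) :
    (finitenessIdeal φ).Nonempty := by
  rw [Set.nonempty_iff_ne_empty]
  intro h
  rw [← hφ.minExt_indicator_finitenessIdeal hφs, h, Set.indicator_empty] at hx
  exact hx (congrFun minExt_zero x)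

lemma IsIdeal.inter_nonempty (hprim : ∀ x y : G.V, ∃ z, G.le x z ∧ G.le y z) {I J : Set G.V}
    (hI : G.IsIdeal I) (hJ : G.IsIdeal J) (hIne : I.Nonempty) (hJne : J.Nonempty) :
    (I ∩ J).Nonempty := by
  obtain ⟨x, hx⟩ := hJne
  obtain ⟨z, hzI, hxz⟩ := exists_mem_le_of_isIdeal hprim hI hIne x
  exact ⟨z, hzI, hJ x hx z hxz⟩

lemma exists_mem_ne_zero_of_minExt_eq {J : Set G.V} {φ u : G.V → ℝ≥0∞} (hφ : G.Harmonic φ)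
    (hJ : G.IsIdeal J) (hφJ : G.minExt (J.indicator φ) = φ) (hu : G.Harmonic u) (hu' : u ≤ φ)
    {x : G.V} (hx : φ x ≠ ⊤) (hux : u x ≠ 0) : ∃ z ∈ J, u z ≠ 0 := by
  by_contra! h
  exact hux (eqOn_finitenessIdeal_of_eqOn hφ hJ hφJ hu harmonic_zero hu' zero_le h hx)

section Lift

variable {I : Set G.V} {hI : G.IsIdeal I} {w : (G.restrict I hI).V → ℝ≥0∞}

noncomputable def liftExt (w : (G.restrict I hI).V → ℝ≥0∞) : G.V → ℝ≥0∞ :=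
  G.minExt (extendByZero ((finitenessIdeal w).indicator w))

lemma Harmonic.isHarmonicOnIdeal_extendByZero (hw : (G.restrict I hI).Harmonic w) :
    G.IsHarmonicOnIdeal (Subtype.val '' finitenessIdeal w)
      (extendByZero ((finitenessIdeal w).indicator w)) :=
  (hw.isHarmonicOnIdeal_indicator hw.isIdeal_finitenessIdeal).extendByZero

lemma Harmonic.harmonic_liftExt (hw : (G.restrict I hI).Harmonic w) : G.Harmonic (liftExt w) :=
  hw.isHarmonicOnIdeal_extendByZero.harmonic_minExt

lemma Harmonic.finite_or_semifinite_liftExt (hw : (G.restrict I hI).Harmonic w) :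
    G.FiniteH (liftExt w) ∨ G.Semifinite (liftExt w) :=
  hw.isHarmonicOnIdeal_extendByZero.finite_or_semifinite_minExt
    (extendByZero_ne_top (indicator_ne_top_of_subset subset_rfl le_rfl))

lemma Harmonic.liftExt_val (hw : (G.restrict I hI).Harmonic w)
    (hws : (G.restrict I hI).FiniteH w ∨ (G.restrict I hI).Semifinite w)
    (x : (G.restrict I hI).V) : liftExt w x.1 = w x := by
  rw [liftExt, minExt_extendByZero, hw.minExt_indicator_finitenessIdeal hws]

lemma liftExt_le {φ : G.V → ℝ≥0∞} (hφ : G.Harmonic φ) (h : ∀ x, w x ≤ φ x.1) :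
    liftExt w ≤ φ :=
  hφ.minExt_le (extendByZero_le fun x => (Set.indicator_le_self _ w x).trans (h x))

lemma Harmonic.minExt_indicator_liftExt (hw : (G.restrict I hI).Harmonic w)
    (hws : (G.restrict I hI).FiniteH w ∨ (G.restrict I hI).Semifinite w) :
    G.minExt ((I ∩ finitenessIdeal (liftExt w)).indicator (liftExt w)) = liftExt w := by
  conv_rhs => rw [liftExt]
  congr 1
  funext y
  by_cases hy : y ∈ I
  · obtain ⟨x, rfl⟩ : ∃ x : (G.restrict I hI).V, x.1 = y := ⟨⟨y, hy⟩, rfl⟩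
    have hval := hw.liftExt_val hws x
    rw [extendByZero_val]
    by_cases hx : w x = ⊤
    · rw [Set.indicator_of_notMem (s := I ∩ finitenessIdeal (liftExt w))
          fun h => h.2 (hval.trans hx),
        Set.indicator_of_notMem (s := finitenessIdeal w) fun h => h hx]
    · rw [Set.indicator_of_mem (s := I ∩ finitenessIdeal (liftExt w)) ⟨hy, hval.trans_ne hx⟩,
        Set.indicator_of_mem hx, hval]
  · simp [Set.indicator_of_notMem (fun h : y ∈ I ∩ _ => hy h.1), extendByZero_of_notMem _ hy]

end Lift

/-- `IndecSemifinite` serves finite functions too, by `indecFinite_iff_indecSemifinite`. -/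
structure IsPositiveIndecomposable (G : GradedGraph) (φ : G.V → ℝ≥0∞) : Prop where
  harmonic : G.Harmonic φ
  pos : ∀ x, 0 < φ x
  finite_or_semifinite : G.FiniteH φ ∨ G.Semifinite φ
  indec : G.IndecSemifinite φ

section Indecomposable

variable {φ : G.V → ℝ≥0∞}

lemma indecFinite_iff_indecSemifinite (hφ : G.FiniteH φ) :
    G.IndecFinite φ ↔ G.IndecSemifinite φ := by
  constructor
  · intro h φ' hφ' _ hle ⟨x, _, hx⟩
    obtain ⟨c, hc⟩ := h φ' hφ' hle ⟨x, hx⟩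
    exact ⟨c, fun x _ => hc x⟩
  · intro h φ' hφ' hle ⟨x, hx⟩
    obtain ⟨c, hc⟩ :=
      h φ' hφ' (.inl fun y => ne_top_of_le_ne_top (hφ y) (hle y)) hle ⟨x, hφ x, hx⟩
    exact ⟨c, fun y => hc y (hφ y)⟩

lemma isPositiveIndecomposable_iff : G.IsPositiveIndecomposable φ ↔ G.Harmonic φ ∧ (∀ x, 0 < φ x) ∧
    ((G.FiniteH φ ∧ G.IndecFinite φ) ∨ (G.Semifinite φ ∧ G.IndecSemifinite φ)) := by
  constructor
  · rintro ⟨hφ, hpos, hfin | hsemi, hind⟩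
    · exact ⟨hφ, hpos, .inl ⟨hfin, (indecFinite_iff_indecSemifinite hfin).2 hind⟩⟩
    · exact ⟨hφ, hpos, .inr ⟨hsemi, hind⟩⟩
  · rintro ⟨hφ, hpos, ⟨hfin, hind⟩ | ⟨hsemi, hind⟩⟩
    · exact ⟨hφ, hpos, .inl hfin, (indecFinite_iff_indecSemifinite hfin).1 hind⟩
    · exact ⟨hφ, hpos, .inr hsemi, hind⟩

/-- The minimal extension `η` of `φ` from `I ∩ finitenessIdeal φ` is a harmonic minorant of `φ`
agreeing with it at some vertex, so by indecomposability `η = φ` wherever `φ` is finite; and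
`φ` is in turn the minimal extension of those values. -/
lemma IsPositiveIndecomposable.minExt_indicator_inter
    (hprim : ∀ x y : G.V, ∃ z, G.le x z ∧ G.le y z) {I : Set G.V} (hI : G.IsIdeal I)
    (hne : I.Nonempty) (hφ : G.IsPositiveIndecomposable φ) :
    G.minExt ((I ∩ finitenessIdeal φ).indicator φ) = φ := by
  have hF := hφ.harmonic.isIdeal_finitenessIdeal
  have hv := hφ.harmonic.isHarmonicOnIdeal_indicator (hI.inter hF)
  set η := G.minExt ((I ∩ finitenessIdeal φ).indicator φ)
  have hηφ : η ≤ φ := hφ.harmonic.minExt_le (Set.indicator_le_self _ φ)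
  obtain ⟨z, hz⟩ := hI.inter_nonempty hprim hF hne
    (hφ.harmonic.finitenessIdeal_nonempty hφ.finite_or_semifinite (hφ.pos hne.some).ne')
  have hηz : η z = φ z := (hv.minExt_eq hz).trans (Set.indicator_of_mem hz φ)
  obtain ⟨c, hc⟩ := hφ.indec η hv.harmonic_minExt
    (hv.finite_or_semifinite_minExt (indicator_ne_top_of_subset Set.inter_subset_right le_rfl))
    hηφ ⟨z, hz.2, hηz ▸ (hφ.pos z).ne'⟩
  have hc1 : (c : ℝ≥0∞) = 1 :=
    (ENNReal.mul_eq_right (hφ.pos z).ne' hz.2).1 ((hc z hz.2).symm.trans hηz)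
  refine le_antisymm hηφ ?_
  calc φ = G.minExt ((finitenessIdeal φ).indicator φ) :=
        (hφ.harmonic.minExt_indicator_finitenessIdeal hφ.finite_or_semifinite).symm
    _ ≤ η := hv.harmonic_minExt.minExt_le <| Set.indicator_le fun y hy =>
        ((hc y hy).trans (by rw [hc1, one_mul])).ge

lemma indicator_inter_finitenessIdeal_congr {I : Set G.V} {φ ψ : G.V → ℝ≥0∞}
    (h : Set.EqOn φ ψ I) :
    (I ∩ finitenessIdeal φ).indicator φ = (I ∩ finitenessIdeal ψ).indicator ψ := by
  classical
  funext y
  by_cases hy : y ∈ I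
  · simp [Set.indicator_apply, finitenessIdeal, hy, h hy]
  · simp [hy]

lemma IsPositiveIndecomposable.eq_of_eqOn (hprim : ∀ x y : G.V, ∃ z, G.le x z ∧ G.le y z)
    {I : Set G.V} (hI : G.IsIdeal I) (hne : I.Nonempty) {ψ : G.V → ℝ≥0∞}
    (hφ : G.IsPositiveIndecomposable φ) (hψ : G.IsPositiveIndecomposable ψ)
    (h : Set.EqOn φ ψ I) : φ = ψ :=
  calc φ = G.minExt ((I ∩ finitenessIdeal φ).indicator φ) :=
        (hφ.minExt_indicator_inter hprim hI hne).symm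
    _ = G.minExt ((I ∩ finitenessIdeal ψ).indicator ψ) := by
        rw [indicator_inter_finitenessIdeal_congr h]
    _ = ψ := hψ.minExt_indicator_inter hprim hI hne

end Indecomposable

section Restriction

variable {I : Set G.V} {hI : G.IsIdeal I}

lemma IsPositiveIndecomposable.restrict (hprim : ∀ x y : G.V, ∃ z, G.le x z ∧ G.le y z)
    (hne : I.Nonempty) {φ : G.V → ℝ≥0∞} (hφ : G.IsPositiveIndecomposable φ) :
    (G.restrict I hI).IsPositiveIndecomposable (fun x => φ x.1) where
  harmonic := hφ.harmonic.restrict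
  pos x := hφ.pos x.1
  finite_or_semifinite := hφ.harmonic.finite_or_semifinite_restrict
    (hφ.minExt_indicator_inter hprim hI hne)
  indec := by
    intro ψ hψ hψs hψφ ⟨x₀, hx₀, hψx₀⟩
    obtain ⟨c, hc⟩ := hφ.indec (liftExt ψ) hψ.harmonic_liftExt hψ.finite_or_semifinite_liftExt
      (liftExt_le hφ.harmonic hψφ) ⟨x₀.1, hx₀, by rwa [hψ.liftExt_val hψs]⟩
    exact ⟨c, fun x hx => by rw [← hψ.liftExt_val hψs x, hc x.1 hx]⟩

/-- A harmonic minorant `u` of `φ = liftExt ψ` is tested against `ψ` through the minimal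
extension, inside `I`, of its values on the finiteness ideal of `ψ`; the resulting equality
`u = c φ` on `I ∩ finitenessIdeal φ` propagates to `finitenessIdeal φ` by uniqueness. -/
lemma IsPositiveIndecomposable.indecSemifinite_liftExt {ψ : (G.restrict I hI).V → ℝ≥0∞}
    (hψ : (G.restrict I hI).IsPositiveIndecomposable ψ) : G.IndecSemifinite (liftExt ψ) := by
  have hφ : G.Harmonic (liftExt ψ) := hψ.harmonic.harmonic_liftExt
  have hφψ := hψ.harmonic.liftExt_val hψ.finite_or_semifinite
  have hJ : G.IsIdeal (I ∩ finitenessIdeal (liftExt ψ)) := hI.inter hφ.isIdeal_finitenessIdeal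
  have hφJ := hψ.harmonic.minExt_indicator_liftExt hψ.finite_or_semifinite
  have hmem : ∀ y (hy : y ∈ I ∩ finitenessIdeal (liftExt ψ)),
      (⟨y, hy.1⟩ : (G.restrict I hI).V) ∈ finitenessIdeal ψ :=
    fun y hy => (hφψ ⟨y, hy.1⟩).symm.trans_ne hy.2
  intro u hu _ huφ ⟨x₀, hx₀, hux₀⟩
  obtain ⟨z, hzJ, huz⟩ := exists_mem_ne_zero_of_minExt_eq hφ hJ hφJ hu huφ hx₀ hux₀
  have hv := (hu.restrict (hI := hI)).isHarmonicOnIdeal_indicator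
    hψ.harmonic.isIdeal_finitenessIdeal
  set ψ' := (G.restrict I hI).minExt ((finitenessIdeal ψ).indicator fun x => u x.1)
  have hψ'u : ∀ x ∈ finitenessIdeal ψ, ψ' x = u x.1 :=
    fun x hx => (hv.minExt_eq hx).trans (Set.indicator_of_mem hx _)
  have huψ : (fun x : (G.restrict I hI).V => u x.1) ≤ ψ := fun x => (huφ x.1).trans (hφψ x).le
  have hψ'ψ : ψ' ≤ ψ := by
    calc ψ' ≤ (G.restrict I hI).minExt ((finitenessIdeal ψ).indicator ψ) :=
          minExt_mono fun x => Set.indicator_le_indicator (huψ x)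
      _ = ψ := hψ.harmonic.minExt_indicator_finitenessIdeal hψ.finite_or_semifinite
  obtain ⟨c, hc⟩ := hψ.indec ψ' hv.harmonic_minExt
    (hv.finite_or_semifinite_minExt (indicator_ne_top_of_subset subset_rfl huψ)) hψ'ψ
    ⟨⟨z, hzJ.1⟩, hmem z hzJ, by rwa [hψ'u _ (hmem z hzJ)]⟩
  have huJ : Set.EqOn u (fun y => c * liftExt ψ y) (I ∩ finitenessIdeal (liftExt ψ)) :=
    fun y hy => by rw [← hψ'u _ (hmem y hy), hc _ (hmem y hy), ← hφψ ⟨y, hy.1⟩]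
  have hc1 : (c : ℝ≥0∞) ≤ 1 := by
    have hz0 : liftExt ψ z ≠ 0 := (pos_of_ne_zero huz).trans_le (huφ z) |>.ne'
    refine (ENNReal.mul_le_mul_iff_left hz0 hzJ.2).1 ?_
    rw [one_mul]
    exact (huJ hzJ).symm.trans_le (huφ z)
  exact ⟨c, fun x hx => eqOn_finitenessIdeal_of_eqOn hφ hJ hφJ hu (hφ.const_mul c) huφ
    (fun y => mul_le_of_le_one_left' hc1) huJ hx⟩

lemma IsPositiveIndecomposable.liftExt (hprim : ∀ x y : G.V, ∃ z, G.le x z ∧ G.le y z)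
    (hne : I.Nonempty) {ψ : (G.restrict I hI).V → ℝ≥0∞}
    (hψ : (G.restrict I hI).IsPositiveIndecomposable ψ) :
    G.IsPositiveIndecomposable (liftExt ψ) where
  harmonic := hψ.harmonic.harmonic_liftExt
  pos x := by
    obtain ⟨z, hz, hxz⟩ := exists_mem_le_of_isIdeal hprim hI hne x
    calc 0 < ψ ⟨z, hz⟩ := hψ.pos _
      _ = GradedGraph.liftExt ψ z :=
          (hψ.harmonic.liftExt_val hψ.finite_or_semifinite ⟨z, hz⟩).symm
      _ ≤ GradedGraph.liftExt ψ x := hψ.harmonic.harmonic_liftExt.antitone hxz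
  finite_or_semifinite := hψ.harmonic.finite_or_semifinite_liftExt
  indec := hψ.indecSemifinite_liftExt

end Restriction

end GradedGraph

/-- Let `Γ` be a primitive graded graph and `I` a nonempty ideal of
`Γ`.  Restriction of functions is a bijection between the strictly positive
indecomposable (finite or semifinite) harmonic functions on `Γ` and those on `I`. -/
theorem restriction_bijective (G : GradedGraph)
    (hprim : ∀ x y : G.V, ∃ z, G.le x z ∧ G.le y z)
    (I : Set G.V) (hI : G.IsIdeal I) (hne : I.Nonempty) :
    Set.BijOn
      (fun (φ : G.V → ℝ≥0∞) => (fun x : (G.restrict I hI).V => φ x.1))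
      {φ : G.V → ℝ≥0∞ | G.Harmonic φ ∧ (∀ x, 0 < φ x) ∧
        ((G.FiniteH φ ∧ G.IndecFinite φ) ∨ (G.Semifinite φ ∧ G.IndecSemifinite φ))}
      {ψ : (G.restrict I hI).V → ℝ≥0∞ | (G.restrict I hI).Harmonic ψ ∧
        (∀ x, 0 < ψ x) ∧
        (((G.restrict I hI).FiniteH ψ ∧ (G.restrict I hI).IndecFinite ψ) ∨
          ((G.restrict I hI).Semifinite ψ ∧ (G.restrict I hI).IndecSemifinite ψ))} := by
  have key : Set.BijOn (fun (φ : G.V → ℝ≥0∞) (x : (G.restrict I hI).V) => φ x.1)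
      {φ | G.IsPositiveIndecomposable φ} {ψ | (G.restrict I hI).IsPositiveIndecomposable ψ} :=
    ⟨fun _ hφ => hφ.restrict hprim hne,
      fun _ hφ _ hψ h => hφ.eq_of_eqOn hprim hI hne hψ fun x hx => congrFun h ⟨x, hx⟩,
      fun ψ hψ => ⟨GradedGraph.liftExt ψ, hψ.liftExt hprim hne,
        funext (hψ.harmonic.liftExt_val hψ.finite_or_semifinite)⟩⟩
  simpa only [GradedGraph.isPositiveIndecomposable_iff] using key

end Zigzag
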